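/- There is a universal constant A ≥ 1 with the following property. Let μ be a probability measure on a measurable space Ω, let C ≥ 1, and let X : ℝ → Ω → ℝ be a family of measurable functions such that for every real p ≥ 2: (∫ |X 0|^p dμ)^{1/p} ≤ C·√p, and (∫ |X x − X y|^p dμ)^{1/p} ≤ C·√p·|x − y|^{1/2} for all x, y ∈ [0,1]. Let S(ω) := ⨆_{x ∈ D} |X x ω|, where D := {k/2^n | n ∈ ℕ, k ∈ ℕ, k ≤ 2^n} is the set of dyadic rationals in [0,1]. Then for every real p ≥ 2, ∫ S^p dμ ≤ (A·C)^p · p^{p/2}. -/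

import Mathlib

/-!
Every dyadic point `k / 2ⁿ` of `[0, 1]` is reached from `0` or `1` through its ancestors
`⌊k / 2ⁿ⁻ᵐ⌋ / 2ᵐ`, so `|X (k / 2ⁿ)| ≤ |X 0| + |X 1 - X 0| + ∑ₘ Mₘ`, where `Mₘ` is the largest
increment between a point of level `m + 1` and its parent. To bound `‖Mₘ‖_p`, pass to the exponent
`2p ≥ 4` and take a union bound over the `2ᵐ⁺¹ + 1` points of level `m + 1`: the cost
`(2ᵐ⁺²)^(1/2p) ≤ 2^((m + 2)/4)` is beaten by the size `2^(-(m + 1)/2)` of each increment, leaving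
`‖Mₘ‖_p ≤ √2 C √p 2^(-m/4)`. Minkowski's inequality for the series and the geometric sum finish.
-/

open MeasureTheory

/-- The set of dyadic rationals `k/2ⁿ` in `[0,1]`. -/
def dyadicSet : Set ℝ := {t : ℝ | ∃ n k : ℕ, k ≤ 2 ^ n ∧ t = (k : ℝ) / 2 ^ n}

open scoped ENNReal

section LpBounds

variable {α : Type*} [MeasurableSpace α] {μ : Measure α}

theorem lintegral_rpow_enorm_eq_eLpNorm_ofReal_rpow {ε : Type*} [ENorm ε] (f : α → ε) {q : ℝ}
    (hq : 0 < q) : ∫⁻ a, ‖f a‖ₑ ^ q ∂μ = eLpNorm f (ENNReal.ofReal q) μ ^ q := by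
  rw [eLpNorm_eq_eLpNorm' (by simpa using hq) ENNReal.ofReal_ne_top, ENNReal.toReal_ofReal hq.le,
    lintegral_rpow_enorm_eq_rpow_eLpNorm' hq]

theorem lintegral_ofReal_abs_rpow_eq_eLpNorm_rpow (f : α → ℝ) {q : ℝ} (hq : 0 < q) :
    ∫⁻ a, ENNReal.ofReal (|f a| ^ q) ∂μ = eLpNorm f (ENNReal.ofReal q) μ ^ q := by
  simp_rw [← ENNReal.ofReal_rpow_of_nonneg (abs_nonneg _) hq.le, ← Real.enorm_eq_ofReal_abs]
  exact lintegral_rpow_enorm_eq_eLpNorm_ofReal_rpow f hq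

theorem lintegral_ofReal_abs_rpow_rpow_one_div_eq_eLpNorm (f : α → ℝ) {q : ℝ} (hq : 0 < q) :
    (∫⁻ a, ENNReal.ofReal (|f a| ^ q) ∂μ) ^ (1 / q) = eLpNorm f (ENNReal.ofReal q) μ := by
  rw [lintegral_ofReal_abs_rpow_eq_eLpNorm_rpow f hq, ← ENNReal.rpow_mul, mul_one_div_cancel hq.ne',
    ENNReal.rpow_one]

theorem eLpNorm_iSup_le_card_rpow_mul {ι : Type*} [Fintype ι] {f : ι → α → ℝ≥0∞}
    (hf : ∀ i, AEMeasurable (f i) μ) {q : ℝ} (hq : 0 < q) {K : ℝ≥0∞}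
    (hK : ∀ i, eLpNorm (f i) (ENNReal.ofReal q) μ ≤ K) :
    eLpNorm (fun a ↦ ⨆ i, f i a) (ENNReal.ofReal q) μ ≤ (Fintype.card ι : ℝ≥0∞) ^ (1 / q) * K := by
  have hpow (a : α) : (⨆ i, f i a) ^ q ≤ ∑ i, f i a ^ q := by
    rw [← ENNReal.orderIsoRpow_apply q hq, OrderIso.map_iSup]
    exact iSup_le fun i ↦ Finset.single_le_sum (f := fun i ↦ f i a ^ q) (fun _ _ ↦ zero_le)
      (Finset.mem_univ i)
  have hmoment : eLpNorm (fun a ↦ ⨆ i, f i a) (ENNReal.ofReal q) μ ^ q ≤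
      Fintype.card ι * K ^ q := by
    rw [← lintegral_rpow_enorm_eq_eLpNorm_ofReal_rpow _ hq]
    calc ∫⁻ a, (⨆ i, f i a) ^ q ∂μ ≤ ∫⁻ a, ∑ i, f i a ^ q ∂μ := lintegral_mono hpow
      _ = ∑ i, eLpNorm (f i) (ENNReal.ofReal q) μ ^ q := by
        rw [lintegral_finsetSum' _ fun i _ ↦ (hf i).pow_const q]
        exact Finset.sum_congr rfl fun i _ ↦ lintegral_rpow_enorm_eq_eLpNorm_ofReal_rpow (f i) hq
      _ ≤ ∑ _i : ι, K ^ q := by gcongr with i; exact hK i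
      _ = Fintype.card ι * K ^ q := by simp
  rw [← ENNReal.rpow_le_rpow_iff hq, ENNReal.mul_rpow_of_nonneg _ _ hq.le, ← ENNReal.rpow_mul,
    one_div_mul_cancel hq.ne', ENNReal.rpow_one]
  exact hmoment

theorem eLpNorm_tsum_le {f : ℕ → α → ℝ≥0∞} (hf : ∀ n, AEMeasurable (f n) μ) {p : ℝ} (hp : 1 ≤ p) :
    eLpNorm (fun a ↦ ∑' n, f n a) (ENNReal.ofReal p) μ ≤
      ∑' n, eLpNorm (f n) (ENNReal.ofReal p) μ := by
  have hp0 : 0 < p := by linarith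
  have hpartial (N : ℕ) : eLpNorm (fun a ↦ ∑ n ∈ Finset.range N, f n a) (ENNReal.ofReal p) μ ≤
      ∑' n, eLpNorm (f n) (ENNReal.ofReal p) μ := by
    simp_rw [← Finset.sum_apply]
    refine (eLpNorm_sum_le (fun n _ ↦ (hf n).aestronglyMeasurable) (by simpa using hp)).trans ?_
    exact ENNReal.sum_le_tsum _
  rw [← ENNReal.rpow_le_rpow_iff hp0, ← lintegral_rpow_enorm_eq_eLpNorm_ofReal_rpow _ hp0]
  calc ∫⁻ a, ‖∑' n, f n a‖ₑ ^ p ∂μ = ∫⁻ a, ⨆ N, (∑ n ∈ Finset.range N, f n a) ^ p ∂μ :=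
        lintegral_congr fun a ↦ by
          rw [enorm_eq_self, ENNReal.tsum_eq_iSup_nat]
          exact (ENNReal.orderIsoRpow p hp0).map_iSup _
    _ = ⨆ N, ∫⁻ a, (∑ n ∈ Finset.range N, f n a) ^ p ∂μ :=
        lintegral_iSup' (fun N ↦ (Finset.aemeasurable_fun_sum _ fun n _ ↦ hf n).pow_const p)
          (Filter.Eventually.of_forall fun a N N' h ↦ ENNReal.rpow_le_rpow
            (Finset.sum_le_sum_of_subset (Finset.range_subset_range.2 h)) hp0.le)
    _ ≤ _ := iSup_le fun N ↦ (lintegral_rpow_enorm_eq_eLpNorm_ofReal_rpow _ hp0).trans_le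
        (ENNReal.rpow_le_rpow (hpartial N) hp0.le)

end LpBounds

theorem ENNReal.ofReal_biSup_le {ι : Type*} {s : Set ι} {g : ι → ℝ} {b : ℝ≥0∞}
    (h : ∀ i ∈ s, ENNReal.ofReal (g i) ≤ b) : ENNReal.ofReal (⨆ i ∈ s, g i) ≤ b := by
  rcases eq_top_or_lt_top b with rfl | hb
  · exact le_top
  simp_rw [ENNReal.ofReal_le_iff_le_toReal hb.ne] at h ⊢
  exact Real.iSup_le (fun i ↦ Real.iSup_le (h i) ENNReal.toReal_nonneg) ENNReal.toReal_nonneg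

section Chaining

variable {E : Type*} [NormedAddCommGroup E]

theorem enorm_le_enorm_add_enorm_sub (u v : E) : ‖u‖ₑ ≤ ‖v‖ₑ + ‖u - v‖ₑ := by
  simpa using enorm_add_le v (u - v)

/-- `⌊j / 2⌋ / 2 ^ m` is the parent of `j / 2 ^ (m + 1)` one dyadic level up. -/
noncomputable def dyadicIncrementSup (f : ℝ → E) (m : ℕ) : ℝ≥0∞ :=
  ⨆ j : Fin (2 ^ (m + 1) + 1), ‖f ((j : ℕ) / 2 ^ (m + 1)) - f (((j : ℕ) / 2 : ℕ) / 2 ^ m)‖ₑ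

theorem enorm_le_dyadic_chain (f : ℝ → E) {n k : ℕ} (hk : k ≤ 2 ^ n) :
    ‖f (k / 2 ^ n)‖ₑ ≤
      ‖f 0‖ₑ + ‖f 1 - f 0‖ₑ + ∑ m ∈ Finset.range n, dyadicIncrementSup f m := by
  induction n generalizing k with
  | zero =>
    interval_cases k
    · simp
    · simpa using enorm_le_enorm_add_enorm_sub (f 1) (f 0)
  | succ n ih =>
    have hparent : k / 2 ≤ 2 ^ n := Nat.div_le_of_le_mul (by rw [← pow_succ']; exact hk)
    have hincrement : ‖f (k / 2 ^ (n + 1)) - f ((k / 2 : ℕ) / 2 ^ n)‖ₑ ≤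
        dyadicIncrementSup f n :=
      le_iSup (fun j : Fin (2 ^ (n + 1) + 1) ↦
        ‖f ((j : ℕ) / 2 ^ (n + 1)) - f (((j : ℕ) / 2 : ℕ) / 2 ^ n)‖ₑ) ⟨k, by omega⟩
    calc ‖f (k / 2 ^ (n + 1))‖ₑ
        ≤ ‖f ((k / 2 : ℕ) / 2 ^ n)‖ₑ + ‖f (k / 2 ^ (n + 1)) - f ((k / 2 : ℕ) / 2 ^ n)‖ₑ :=
          enorm_le_enorm_add_enorm_sub _ _
      _ ≤ _ := add_le_add (ih hparent) hincrement
      _ = _ := by rw [Finset.sum_range_succ, add_assoc]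

theorem iSup_dyadicSet_abs_nonneg (f : ℝ → ℝ) : 0 ≤ ⨆ x ∈ dyadicSet, |f x| :=
  Real.iSup_nonneg fun _ ↦ Real.iSup_nonneg fun _ ↦ abs_nonneg _

theorem enorm_iSup_dyadicSet_abs_le (f : ℝ → ℝ) :
    ‖⨆ x ∈ dyadicSet, |f x|‖ₑ ≤ ‖f 0‖ₑ + ‖f 1 - f 0‖ₑ + ∑' m, dyadicIncrementSup f m := by
  rw [Real.enorm_eq_ofReal_abs, abs_of_nonneg (iSup_dyadicSet_abs_nonneg f)]
  refine ENNReal.ofReal_biSup_le ?_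
  rintro _ ⟨n, k, hk, rfl⟩
  rw [← Real.enorm_eq_ofReal_abs]
  exact (enorm_le_dyadic_chain f hk).trans (by gcongr; exact ENNReal.sum_le_tsum _)

theorem natCast_div_two_pow_mem_Icc {k n : ℕ} (hk : k ≤ 2 ^ n) :
    (k : ℝ) / 2 ^ n ∈ Set.Icc (0 : ℝ) 1 :=
  ⟨by positivity, div_le_one_of_le₀ (by exact_mod_cast hk) (by positivity)⟩

theorem abs_div_two_pow_sub_parent_le (j m : ℕ) :
    |(j : ℝ) / 2 ^ (m + 1) - ((j / 2 : ℕ) : ℝ) / 2 ^ m| ≤ ((2 : ℝ) ^ (m + 1))⁻¹ := by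
  have hj : (j : ℝ) = 2 * ((j / 2 : ℕ) : ℝ) + ((j % 2 : ℕ) : ℝ) := by
    exact_mod_cast (Nat.div_add_mod j 2).symm
  have hrem : ((j % 2 : ℕ) : ℝ) ≤ 1 := by exact_mod_cast Nat.le_of_lt_succ (Nat.mod_lt j two_pos)
  have hdiff : (j : ℝ) / 2 ^ (m + 1) - ((j / 2 : ℕ) : ℝ) / 2 ^ m =
      ((j % 2 : ℕ) : ℝ) * ((2 : ℝ) ^ (m + 1))⁻¹ := by
    rw [hj, pow_succ]; field_simp; ring
  rw [hdiff, abs_of_nonneg (by positivity)]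
  exact mul_le_of_le_one_left (by positivity) hrem

end Chaining

theorem dyadic_level_factor_le {p : ℝ} (hp : 2 ≤ p) (m : ℕ) :
    ((2 : ℝ) ^ (m + 1) + 1) ^ (1 / (2 * p)) * √(2 * p) * ((2 : ℝ) ^ (m + 1))⁻¹ ^ (1 / 2 : ℝ) ≤
      √2 * √p * ((2 : ℝ) ^ (-(1 / 4 : ℝ))) ^ m := by
  have hcount : ((2 : ℝ) ^ (m + 1) + 1) ^ (1 / (2 * p)) ≤ (2 : ℝ) ^ (((m : ℝ) + 2) / 4) := by
    have hle : (2 : ℝ) ^ (m + 1) + 1 ≤ (2 : ℝ) ^ ((m : ℝ) + 2) := by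
      rw [show (m : ℝ) + 2 = ((m + 2 : ℕ) : ℝ) by push_cast; ring, Real.rpow_natCast,
        pow_succ _ (m + 1)]
      linarith [one_le_pow₀ (M₀ := ℝ) (a := 2) (n := m + 1) (by norm_num)]
    calc ((2 : ℝ) ^ (m + 1) + 1) ^ (1 / (2 * p))
        ≤ ((2 : ℝ) ^ ((m : ℝ) + 2)) ^ (1 / (2 * p)) := by gcongr
      _ = (2 : ℝ) ^ (((m : ℝ) + 2) / (2 * p)) := by rw [← Real.rpow_mul (by norm_num)]; ring_nf
      _ ≤ (2 : ℝ) ^ (((m : ℝ) + 2) / 4) := by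
        gcongr
        · norm_num
        · linarith
  have hsqrt : √(2 * p) = (2 : ℝ) ^ (1 / 2 : ℝ) * √p := by
    rw [Real.sqrt_mul (by norm_num), Real.sqrt_eq_rpow]
  have hdist : ((2 : ℝ) ^ (m + 1))⁻¹ ^ (1 / 2 : ℝ) = (2 : ℝ) ^ (-((m : ℝ) + 1) / 2) := by
    rw [← Real.rpow_natCast, ← Real.rpow_neg (by norm_num), ← Real.rpow_mul (by norm_num)]
    push_cast; ring_nf
  have hratio : ((2 : ℝ) ^ (-(1 / 4 : ℝ))) ^ m = (2 : ℝ) ^ (-(m : ℝ) / 4) := by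
    rw [← Real.rpow_natCast, ← Real.rpow_mul (by norm_num)]; ring_nf
  calc ((2 : ℝ) ^ (m + 1) + 1) ^ (1 / (2 * p)) * √(2 * p) * ((2 : ℝ) ^ (m + 1))⁻¹ ^ (1 / 2 : ℝ)
      ≤ (2 : ℝ) ^ (((m : ℝ) + 2) / 4) * √(2 * p) * ((2 : ℝ) ^ (m + 1))⁻¹ ^ (1 / 2 : ℝ) := by
        gcongr
    _ = (2 : ℝ) ^ (((m : ℝ) + 2) / 4 + 1 / 2 + -((m : ℝ) + 1) / 2) * √p := by
        rw [hsqrt, hdist, Real.rpow_add two_pos, Real.rpow_add two_pos]; ring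
    _ = (2 : ℝ) ^ (1 / 2 + -(m : ℝ) / 4) * √p := by ring_nf
    _ = √2 * √p * ((2 : ℝ) ^ (-(1 / 4 : ℝ))) ^ m := by
        rw [hratio, Real.sqrt_eq_rpow 2, Real.rpow_add two_pos]; ring

/-- `2` pays for `X 0` and `X 1 - X 0`, and `√2 / (1 - 2 ^ (-1/4))` sums the level bounds
`√2 · 2 ^ (-m/4)`. -/
noncomputable def dyadicChainingConstant : ℝ := 2 + √2 / (1 - 2 ^ (-(1 / 4 : ℝ)))

theorem two_rpow_neg_quarter_lt_one : (2 : ℝ) ^ (-(1 / 4 : ℝ)) < 1 :=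
  Real.rpow_lt_one_of_one_lt_of_neg one_lt_two (by norm_num)

theorem one_le_dyadicChainingConstant : 1 ≤ dyadicChainingConstant := by
  have hquotient : 0 ≤ √2 / (1 - 2 ^ (-(1 / 4 : ℝ))) :=
    div_nonneg (Real.sqrt_nonneg 2) (sub_nonneg.2 two_rpow_neg_quarter_lt_one.le)
  rw [dyadicChainingConstant]
  linarith

section Moments

variable {Ω : Type*} [MeasurableSpace Ω] {μ : Measure Ω}

theorem eLpNorm_dyadicIncrementSup_le {X : ℝ → Ω → ℝ} (hX : ∀ x, Measurable (X x)) {q : ℝ}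
    (hq : 0 < q) (m : ℕ) {K : ℝ≥0∞}
    (hinc : ∀ x ∈ Set.Icc (0 : ℝ) 1, ∀ y ∈ Set.Icc (0 : ℝ) 1, |x - y| ≤ ((2 : ℝ) ^ (m + 1))⁻¹ →
      eLpNorm (X x - X y) (ENNReal.ofReal q) μ ≤ K) :
    eLpNorm (fun ω ↦ dyadicIncrementSup (X · ω) m) (ENNReal.ofReal q) μ ≤
      ((2 : ℝ≥0∞) ^ (m + 1) + 1) ^ (1 / q) * K := by
  have hsup := eLpNorm_iSup_le_card_rpow_mul
    (f := fun (j : Fin (2 ^ (m + 1) + 1)) ω ↦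
      ‖X ((j : ℕ) / 2 ^ (m + 1)) ω - X (((j : ℕ) / 2 : ℕ) / 2 ^ m) ω‖ₑ)
    (fun j ↦ ((hX _).sub (hX _)).enorm.aemeasurable) hq fun j ↦ by
      rw [eLpNorm_enorm]
      exact hinc _ (natCast_div_two_pow_mem_Icc (by omega)) _
        (natCast_div_two_pow_mem_Icc (Nat.div_le_of_le_mul (by rw [← pow_succ']; omega)))
        (abs_div_two_pow_sub_parent_le _ _)
  simpa [dyadicIncrementSup] using hsup

theorem eLpNorm_dyadicIncrementSup_le_geometric [IsProbabilityMeasure μ] {X : ℝ → Ω → ℝ}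
    (hX : ∀ x, Measurable (X x)) {C p : ℝ} (hC : 0 ≤ C) (hp : 2 ≤ p)
    (hinc : ∀ q : ℝ, 2 ≤ q → ∀ x ∈ Set.Icc (0 : ℝ) 1, ∀ y ∈ Set.Icc (0 : ℝ) 1,
      eLpNorm (X x - X y) (ENNReal.ofReal q) μ ≤ ENNReal.ofReal (C * √q * |x - y| ^ (1 / 2 : ℝ)))
    (m : ℕ) :
    eLpNorm (fun ω ↦ dyadicIncrementSup (X · ω) m) (ENNReal.ofReal p) μ ≤
      ENNReal.ofReal (√2 * C * √p * ((2 : ℝ) ^ (-(1 / 4 : ℝ))) ^ m) := by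
  have hM : Measurable fun ω ↦ dyadicIncrementSup (X · ω) m :=
    .iSup fun j ↦ ((hX _).sub (hX _)).enorm
  -- at the exponent `2 p ≥ 4` the union bound over `2 ^ (m + 1) + 1` points becomes affordable
  calc eLpNorm (fun ω ↦ dyadicIncrementSup (X · ω) m) (ENNReal.ofReal p) μ
      ≤ eLpNorm (fun ω ↦ dyadicIncrementSup (X · ω) m) (ENNReal.ofReal (2 * p)) μ :=
        eLpNorm_le_eLpNorm_of_exponent_le (ENNReal.ofReal_le_ofReal (by linarith))
          hM.aestronglyMeasurable
    _ ≤ ((2 : ℝ≥0∞) ^ (m + 1) + 1) ^ (1 / (2 * p)) *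
          ENNReal.ofReal (C * √(2 * p) * ((2 : ℝ) ^ (m + 1))⁻¹ ^ (1 / 2 : ℝ)) :=
        eLpNorm_dyadicIncrementSup_le hX (by positivity) m fun x hx y hy hxy ↦
          (hinc _ (by linarith) x hx y hy).trans (by gcongr)
    _ = ENNReal.ofReal (((2 : ℝ) ^ (m + 1) + 1) ^ (1 / (2 * p)) *
          (C * √(2 * p) * ((2 : ℝ) ^ (m + 1))⁻¹ ^ (1 / 2 : ℝ))) := by
        have hcount : ENNReal.ofReal ((2 : ℝ) ^ (m + 1) + 1) = (2 : ℝ≥0∞) ^ (m + 1) + 1 := by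
          exact_mod_cast ENNReal.ofReal_natCast (2 ^ (m + 1) + 1)
        rw [← hcount, ENNReal.ofReal_rpow_of_nonneg (by positivity) (by positivity),
          ← ENNReal.ofReal_mul (by positivity)]
    _ ≤ ENNReal.ofReal (√2 * C * √p * ((2 : ℝ) ^ (-(1 / 4 : ℝ))) ^ m) := by
        refine ENNReal.ofReal_le_ofReal ?_
        linear_combination mul_le_mul_of_nonneg_left (dyadic_level_factor_le hp m) hC

theorem eLpNorm_iSup_dyadicSet_abs_le [IsProbabilityMeasure μ] {X : ℝ → Ω → ℝ}
    (hX : ∀ x, Measurable (X x)) {C p : ℝ} (hC : 0 ≤ C) (hp : 2 ≤ p)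
    (h0 : eLpNorm (X 0) (ENNReal.ofReal p) μ ≤ ENNReal.ofReal (C * √p))
    (hinc : ∀ q : ℝ, 2 ≤ q → ∀ x ∈ Set.Icc (0 : ℝ) 1, ∀ y ∈ Set.Icc (0 : ℝ) 1,
      eLpNorm (X x - X y) (ENNReal.ofReal q) μ ≤ ENNReal.ofReal (C * √q * |x - y| ^ (1 / 2 : ℝ))) :
    eLpNorm (fun ω ↦ ⨆ x ∈ dyadicSet, |X x ω|) (ENNReal.ofReal p) μ ≤
      ENNReal.ofReal (dyadicChainingConstant * C * √p) := by
  set r : ℝ := 2 ^ (-(1 / 4 : ℝ)) with hr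
  have hr1 : r < 1 := two_rpow_neg_quarter_lt_one
  have hr0 : 0 ≤ r := by positivity
  have hp1 : 1 ≤ ENNReal.ofReal p := ENNReal.one_le_ofReal.2 (by linarith)
  have h1 : eLpNorm (X 1 - X 0) (ENNReal.ofReal p) μ ≤ ENNReal.ofReal (C * √p) := by
    simpa using hinc p hp 1 (by norm_num) 0 (by norm_num)
  have hM (m : ℕ) : Measurable fun ω ↦ dyadicIncrementSup (X · ω) m :=
    .iSup fun j ↦ ((hX _).sub (hX _)).enorm
  have hgeom : ∑' m : ℕ, ENNReal.ofReal (√2 * C * √p * r ^ m) =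
      ENNReal.ofReal (√2 * C * √p / (1 - r)) := by
    rw [← ENNReal.ofReal_tsum_of_nonneg (fun m ↦ by positivity)
      ((summable_geometric_of_lt_one hr0 hr1).mul_left _), tsum_mul_left,
      tsum_geometric_of_lt_one hr0 hr1, div_eq_mul_inv]
  calc eLpNorm (fun ω ↦ ⨆ x ∈ dyadicSet, |X x ω|) (ENNReal.ofReal p) μ
      ≤ eLpNorm (fun ω ↦ ‖X 0 ω‖ₑ + ‖X 1 ω - X 0 ω‖ₑ + ∑' m, dyadicIncrementSup (X · ω) m)
          (ENNReal.ofReal p) μ :=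
        eLpNorm_mono_enorm fun ω ↦ enorm_iSup_dyadicSet_abs_le _
    _ ≤ eLpNorm (X 0) (ENNReal.ofReal p) μ + eLpNorm (X 1 - X 0) (ENNReal.ofReal p) μ +
          ∑' m, eLpNorm (fun ω ↦ dyadicIncrementSup (X · ω) m) (ENNReal.ofReal p) μ := by
        have hB : AEStronglyMeasurable (fun ω ↦ ‖X 0 ω‖ₑ + ‖X 1 ω - X 0 ω‖ₑ) μ :=
          ((hX 0).enorm.add ((hX 1).sub (hX 0)).enorm).aestronglyMeasurable
        refine (eLpNorm_add_le hB (Measurable.tsum hM).aestronglyMeasurable hp1).trans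
          (add_le_add ?_ (eLpNorm_tsum_le (fun m ↦ (hM m).aemeasurable) (by linarith)))
        refine (eLpNorm_add_le (hX 0).enorm.aestronglyMeasurable
          ((hX 1).sub (hX 0)).enorm.aestronglyMeasurable hp1).trans_eq ?_
        rw [eLpNorm_enorm, eLpNorm_enorm]
    _ ≤ ENNReal.ofReal (C * √p) + ENNReal.ofReal (C * √p) +
          ∑' m : ℕ, ENNReal.ofReal (√2 * C * √p * r ^ m) := by
        gcongr with m
        exact eLpNorm_dyadicIncrementSup_le_geometric hX hC hp hinc m
    _ = ENNReal.ofReal (dyadicChainingConstant * C * √p) := by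
        rw [hgeom, ← ENNReal.ofReal_add (by positivity) (by positivity),
          ← ENNReal.ofReal_add (by positivity) (div_nonneg (by positivity) (by linarith)),
          dyadicChainingConstant, ← hr]
        ring_nf

end Moments

/-- Dyadic chaining bound: sub-Gaussian moment bounds for a field and its increments on
`[0,1]` yield moment bounds of order `p^{p/2}` for the supremum over dyadic points,
with a universal constant `A`. -/
theorem dyadic_chaining_sup_moment :
    ∃ A : ℝ, 1 ≤ A ∧
      ∀ (Ω : Type) [MeasurableSpace Ω] (μ : Measure Ω) [IsProbabilityMeasure μ]
        (C : ℝ), 1 ≤ C → ∀ X : ℝ → Ω → ℝ, (∀ x : ℝ, Measurable (X x)) →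
        (∀ p : ℝ, 2 ≤ p →
          (∫⁻ ω, ENNReal.ofReal (|X 0 ω| ^ p) ∂μ) ^ (1 / p : ℝ)
            ≤ ENNReal.ofReal (C * Real.sqrt p)) →
        (∀ p : ℝ, 2 ≤ p → ∀ x ∈ Set.Icc (0 : ℝ) 1, ∀ y ∈ Set.Icc (0 : ℝ) 1,
          (∫⁻ ω, ENNReal.ofReal (|X x ω - X y ω| ^ p) ∂μ) ^ (1 / p : ℝ)
            ≤ ENNReal.ofReal (C * Real.sqrt p * |x - y| ^ ((1 : ℝ) / 2))) →
        ∀ p : ℝ, 2 ≤ p →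
          (∫⁻ ω, ENNReal.ofReal ((⨆ x ∈ dyadicSet, |X x ω|) ^ p) ∂μ)
            ≤ ENNReal.ofReal ((A * C) ^ p * p ^ (p / 2)) := by
  refine ⟨dyadicChainingConstant, one_le_dyadicChainingConstant, ?_⟩
  intro Ω _ μ _ C hC X hX h0 hinc p hp
  have hp0 : 0 < p := by linarith
  have hAC : 0 ≤ dyadicChainingConstant * C :=
    mul_nonneg (by linarith [one_le_dyadicChainingConstant]) (by linarith)
  have hsup := eLpNorm_iSup_dyadicSet_abs_le hX (by linarith) hp
    ((lintegral_ofReal_abs_rpow_rpow_one_div_eq_eLpNorm (X 0) hp0).symm.trans_le (h0 p hp))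
    fun q hq x hx y hy ↦ (lintegral_ofReal_abs_rpow_rpow_one_div_eq_eLpNorm (X x - X y)
      (by linarith)).symm.trans_le (hinc q hq x hx y hy)
  calc ∫⁻ ω, ENNReal.ofReal ((⨆ x ∈ dyadicSet, |X x ω|) ^ p) ∂μ
      = eLpNorm (fun ω ↦ ⨆ x ∈ dyadicSet, |X x ω|) (ENNReal.ofReal p) μ ^ p := by
        rw [← lintegral_ofReal_abs_rpow_eq_eLpNorm_rpow _ hp0]
        simp_rw [abs_of_nonneg (iSup_dyadicSet_abs_nonneg _)]
    _ ≤ ENNReal.ofReal (dyadicChainingConstant * C * √p) ^ p := by gcongr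
    _ = ENNReal.ofReal ((dyadicChainingConstant * C) ^ p * p ^ (p / 2)) := by
        rw [ENNReal.ofReal_rpow_of_nonneg (mul_nonneg hAC (Real.sqrt_nonneg p)) hp0.le,
          Real.mul_rpow hAC (Real.sqrt_nonneg p), Real.sqrt_eq_rpow,
          ← Real.rpow_mul hp0.le, one_div_mul_eq_div]
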